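/- For a permutation \sigma \in S_n extended by appending n+1, every leaf of its minimum decomposition tree corresponds to a descent of the extended word, and every descent corresponds to a leaf; hence the number of leaves of the minimum decomposition tree equals des(\sigma) + 1. -/

import Mathlib

/-- A rooted tree with natural-number labels. -/
inductive RTree : Type
  | node : ℕ → List RTree → RTree
deriving Repr

namespace RTree

/-- Number of leaves of a rooted tree (a node with no children is a leaf). -/
def leafCount : RTree → ℕ
  | .node _ cs =>
    if cs.isEmpty then 1 else (cs.attach.map fun c => leafCount c.1).sum
decreasing_by
  have := List.sizeOf_lt_of_mem c.2
  simp only [RTree.node.sizeOf_spec]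
  omega

/-- The list of labels of the leaves of a rooted tree. -/
def leafVals : RTree → List ℕ
  | .node v cs =>
    if cs.isEmpty then [v] else (cs.attach.map fun c => leafVals c.1).flatten
decreasing_by
  have := List.sizeOf_lt_of_mem c.2
  simp only [RTree.node.sizeOf_spec]
  omega

/-- The sum, over all internal (non-leaf) nodes `v`, of the number of leaves in the
subtree of `v`. -/
def incidenceSum : RTree → ℕ
  | .node v cs =>
    if cs.isEmpty then 0
    else leafCount (.node v cs) + (cs.attach.map fun c => incidenceSum c.1).sum
decreasing_by
  have := List.sizeOf_lt_of_mem c.2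
  simp only [RTree.node.sizeOf_spec]
  omega

end RTree

/-- Split a word into blocks by repeatedly cutting just after the (first occurrence of
the) global maximum of the remaining word, as in the maximum-weight tree construction. -/
def maxSplit : ℕ → List ℕ → List (List ℕ)
  | 0, _ => []
  | _, [] => []
  | fuel + 1, l =>
    let i := l.idxOf (l.foldr max 0)
    l.take (i + 1) :: maxSplit fuel (l.drop (i + 1))

/-- Build the minimum decomposition tree of a word: the root is the minimum `m`; the
word splits as `π₁ ⋯ π_L · m · π_R`, where the `πᵢ` are the blocks of the left part
cut at successive global maxima; the children of `m` are the trees of the `πᵢ` and of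
`π_R`. -/
def minDecomp : ℕ → List ℕ → RTree
  | 0, _ => .node 0 []
  | fuel + 1, l =>
    let m := l.foldr min (l.headD 0)
    let i := l.idxOf m
    let left := l.take i
    let right := l.drop (i + 1)
    .node m
      (((maxSplit left.length left).map (minDecomp fuel))
        ++ (if right.isEmpty then [] else [minDecomp fuel right]))

/-- The word of a permutation `σ ∈ Sₙ` (values in `{1,…,n}`) with `n+1` appended. -/
def permWord {n : ℕ} (σ : Equiv.Perm (Fin n)) : List ℕ :=
  (List.ofFn fun i => (σ i : ℕ) + 1) ++ [n + 1]

/-- The minimum decomposition tree of a permutation. -/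
def permTree {n : ℕ} (σ : Equiv.Perm (Fin n)) : RTree :=
  minDecomp (permWord σ).length (permWord σ)

/-- The weight of a permutation `σ ∈ Sₙ` (Corollary 3.3): the sum over the non-descent
nodes of the number of descents (leaves) in their subtree of its maximum-weight maxmin
tree, minus `n`. -/
def permWeight {n : ℕ} (σ : Equiv.Perm (Fin n)) : ℕ :=
  RTree.incidenceSum (permTree σ) - n

/-- The number of descents of a permutation. -/
def numDescents {n : ℕ} (σ : Equiv.Perm (Fin n)) : ℕ :=
  (Finset.univ.filter fun i : Fin n =>
    ∃ h : (i : ℕ) + 1 < n, σ ⟨(i : ℕ) + 1, h⟩ < σ i).card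

/-!
Let `w = π₁ ⋯ π_L · m · π_R` be a word without repeated letters whose last letter is its maximum,
with `m` its minimum. The descents of a concatenation `u ++ v` are those of `u` followed by those
of `v` as soon as the last letter of `u` exceeds the first letter of `v`. This applies at every cut
of the decomposition: each block `πᵢ` ends with its own maximum, which exceeds all later letters
of the left part, and `m` is smaller than both its neighbours, so it is not a descent while the
letter before it is. Hence the descents of `w` are those of the `πᵢ` followed by those of `π_R`.
The blocks and `π_R` again end with their maximum, so induction applies; `π_R` is empty only when
`w = m` is a single letter, which is both a leaf and a descent. The word of a permutation ends
with its maximum `n + 1`.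
-/

namespace List

section

variable {α : Type*} [BEq α] [LawfulBEq α] {x : α} {l : List α}

theorem take_idxOf_add_one (h : x ∈ l) :
    l.take (l.idxOf x + 1) = l.take (l.idxOf x) ++ [x] := by
  rw [take_add_one, getElem?_idxOf h]; rfl

theorem take_append_cons_drop_idxOf (h : x ∈ l) :
    l.take (l.idxOf x) ++ x :: l.drop (l.idxOf x + 1) = l := by
  rw [← singleton_append, ← append_assoc, ← take_idxOf_add_one h, take_append_drop]

end

variable {α : Type*} [LinearOrder α]

theorem foldr_min_mem_cons (a : α) : ∀ l : List α, l.foldr min a ∈ a :: l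
  | [] => mem_cons_self
  | b :: l => by
    rcases min_choice b (l.foldr min a) with h | h <;> rw [foldr_cons, h]
    · exact mem_cons_of_mem _ mem_cons_self
    · have ih := foldr_min_mem_cons a l
      simp only [mem_cons] at ih ⊢
      tauto

theorem foldr_min_le_of_mem_cons (a : α) : ∀ l : List α, ∀ x ∈ a :: l, l.foldr min a ≤ x
  | [], _, hx => (eq_of_mem_singleton hx).ge
  | b :: l, x, hx => by
    rw [foldr_cons]
    rcases mem_cons.1 hx with rfl | hx
    · exact min_le_of_right_le (foldr_min_le_of_mem_cons x l x mem_cons_self)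
    · rcases mem_cons.1 hx with rfl | hx
      · exact min_le_left _ _
      · exact min_le_of_right_le (foldr_min_le_of_mem_cons a l x (mem_cons_of_mem _ hx))

theorem foldr_min_headD_mem {l : List α} (d : α) (h : l ≠ []) :
    l.foldr min (l.headD d) ∈ l := by
  cases l with
  | nil => exact absurd rfl h
  | cons a t => simpa using foldr_min_mem_cons a (a :: t)

theorem foldr_min_headD_le {l : List α} (d : α) {x : α} (hx : x ∈ l) :
    l.foldr min (l.headD d) ≤ x := by
  cases l with
  | nil => cases hx
  | cons a t => exact foldr_min_le_of_mem_cons a (a :: t) x (mem_cons_of_mem _ hx)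

def descents : List α → List α
  | [] => []
  | [x] => [x]
  | x :: y :: l => (if y < x then [x] else []) ++ descents (y :: l)

theorem descents_append : ∀ {a b : List α}, (∀ x ∈ a.getLast?, ∀ y ∈ b.head?, y < x) →
    descents (a ++ b) = descents a ++ descents b
  | [], _, _ => rfl
  | [x], [], _ => rfl
  | [x], y :: l, h => by simp [descents, h x rfl y rfl]
  | x :: y :: a, b, h => by
    rw [cons_append, cons_append, descents, ← cons_append, descents_append (by simpa using h),
      descents, append_assoc]

theorem descents_cons_cons_of_lt {x y : α} (l : List α) (h : x < y) :
    descents (x :: y :: l) = descents (y :: l) := by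
  simp [descents, h.not_gt]

theorem descents_eq_map_filter_range (d : α) : ∀ l : List α,
    descents l = ((range l.length).filter fun i =>
      i + 1 = l.length ∨ l.getD (i + 1) d < l.getD i d).map (l.getD · d)
  | [] => rfl
  | [x] => by simp [descents]
  | x :: y :: l => by
    conv_rhs => rw [length_cons, range_succ_eq_map, filter_cons, filter_map]
    rw [descents, descents_eq_map_filter_range d (y :: l)]
    by_cases hyx : y < x <;> simp [hyx, Function.comp_def]

end List

open List

section MaxSplit

variable {l : List ℕ}

theorem foldr_max_zero_mem (h : l ≠ []) : l.foldr max 0 ∈ l :=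
  maximum_mem (foldr_max_of_ne_nil h).symm

theorem le_foldr_max_zero {x : ℕ} (hx : x ∈ l) : x ≤ l.foldr max 0 :=
  le_max_of_le hx le_rfl

theorem maxSplit_succ_of_ne_nil (f : ℕ) (h : l ≠ []) :
    maxSplit (f + 1) l = l.take (l.idxOf (l.foldr max 0) + 1) ::
      maxSplit f (l.drop (l.idxOf (l.foldr max 0) + 1)) := by
  cases l
  · exact absurd rfl h
  · rfl

theorem mem_maxSplit {f : ℕ} {b : List ℕ} (hb : b ∈ maxSplit f l) :
    b <+ l ∧ ∃ M, b.getLast? = some M ∧ ∀ x ∈ b, x ≤ M := by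
  induction f generalizing l with
  | zero => cases hb
  | succ f ih =>
    rcases eq_or_ne l [] with rfl | hl
    · cases hb
    rw [maxSplit_succ_of_ne_nil f hl, mem_cons] at hb
    rcases hb with rfl | hb
    · refine ⟨take_sublist _ _, l.foldr max 0, ?_,
        fun x hx => le_foldr_max_zero ((take_sublist _ _).mem hx)⟩
      rw [take_idxOf_add_one (foldr_max_zero_mem hl), getLast?_concat]
    · obtain ⟨hsub, hmax⟩ := ih hb
      exact ⟨hsub.trans (drop_sublist _ _), hmax⟩

theorem flatten_map_descents_maxSplit {f : ℕ} (hf : l.length ≤ f) (hnd : l.Nodup) :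
    ((maxSplit f l).map descents).flatten = descents l := by
  induction f generalizing l with
  | zero => rw [length_eq_zero_iff.1 (Nat.le_zero.1 hf)]; rfl
  | succ f ih =>
    rcases eq_or_ne l [] with rfl | hl
    · rfl
    set M := l.foldr max 0
    set j := l.idxOf M
    have hM : M ∈ l.take (j + 1) := by
      rw [take_idxOf_add_one (foldr_max_zero_mem hl)]; exact mem_concat_self
    have hcut : ∀ x ∈ (l.take (j + 1)).getLast?, ∀ y ∈ (l.drop (j + 1)).head?, y < x := by
      intro x hx y hy
      rw [take_idxOf_add_one (foldr_max_zero_mem hl), getLast?_concat, Option.mem_some_iff] at hx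
      have hy : y ∈ l.drop (j + 1) := mem_of_mem_head? hy
      have hyM : y ≠ M := fun h => disjoint_take_drop hnd le_rfl hM (h ▸ hy)
      exact hx ▸ lt_of_le_of_ne (le_foldr_max_zero ((drop_sublist _ _).mem hy)) hyM
    rw [maxSplit_succ_of_ne_nil f hl, map_cons, flatten_cons,
      ih (by rw [length_drop]; omega) (hnd.sublist (drop_sublist _ _)),
      ← descents_append hcut, take_append_drop]

end MaxSplit

theorem RTree.leafVals_node {v : ℕ} {cs : List RTree} (h : cs ≠ []) :
    (RTree.node v cs).leafVals = (cs.map RTree.leafVals).flatten := by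
  rw [RTree.leafVals, if_neg (by simpa using h), attach_map_val]

theorem RTree.leafCount_eq_length_leafVals : ∀ t : RTree, t.leafCount = t.leafVals.length
  | .node v cs => by
    rw [RTree.leafCount, RTree.leafVals]
    split_ifs
    · rfl
    · rw [length_flatten, map_map]
      exact congrArg sum (map_congr_left fun c _ => leafCount_eq_length_leafVals c.1)
decreasing_by
  have := List.sizeOf_lt_of_mem c.2
  simp only [RTree.node.sizeOf_spec]
  omega

theorem leafVals_minDecomp {f M : ℕ} {l : List ℕ} (hf : l.length ≤ f) (hnd : l.Nodup)
    (hlast : l.getLast? = some M) (hmax : ∀ x ∈ l, x ≤ M) :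
    (minDecomp f l).leafVals = descents l := by
  induction f generalizing l M with
  | zero => rw [length_eq_zero_iff.1 (Nat.le_zero.1 hf)] at hlast; cases hlast
  | succ f ih =>
    rw [minDecomp]
    have hne : l ≠ [] := by rintro rfl; cases hlast
    set m := l.foldr min (l.headD 0)
    set left := l.take (l.idxOf m)
    set right := l.drop (l.idxOf m + 1)
    have hl : left ++ m :: right = l := take_append_cons_drop_idxOf (foldr_min_headD_mem 0 hne)
    obtain ⟨-, hm_right, hm_left⟩ := nodup_append.1 (hl ▸ hnd)
    replace hm_right : m ∉ right := (nodup_cons.1 hm_right).1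
    replace hm_left : m ∉ left := fun h => hm_left m h m mem_cons_self rfl
    have hm_lt : ∀ x ∈ l, x ≠ m → m < x := fun x hx hxm =>
      lt_of_le_of_ne (foldr_min_headD_le 0 hx) (Ne.symm hxm)
    have hlen : left.length + right.length + 1 = l.length := by
      rw [← hl, length_append, length_cons]; omega
    rcases eq_or_ne right [] with hright | hright
    · have hleft : left = [] := by
        refine eq_nil_iff_forall_not_mem.2 fun x hx => ?_
        rw [← hl, hright, getLast?_concat, Option.some_inj] at hlast
        have hxl : x ∈ l := hl ▸ mem_append_left _ hx
        exact (hm_lt x hxl (ne_of_mem_of_not_mem hx hm_left)).not_ge (hlast ▸ hmax x hxl)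
      rw [hright, hleft] at hl ⊢
      rw [← hl]
      simp [RTree.leafVals, maxSplit, descents]
    have hblocks : (maxSplit left.length left).map (RTree.leafVals ∘ minDecomp f) =
        (maxSplit left.length left).map descents := map_congr_left fun b hb => by
      obtain ⟨hsub, M', hlast', hmax'⟩ := mem_maxSplit hb
      exact ih (by have := hsub.length_le; omega) (hnd.sublist (hsub.trans (take_sublist _ _)))
        hlast' hmax'
    obtain ⟨r, rs, hr⟩ := exists_cons_of_ne_nil hright
    have hright_last : right.getLast? = some M := by
      rw [← hlast, ← hl, hr, getLast?_append_of_ne_nil _ (cons_ne_nil _ _), getLast?_cons_cons]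
    rw [if_neg (by rwa [List.isEmpty_iff]), RTree.leafVals_node (by simp), map_append, map_map,
      flatten_append, map_singleton, flatten_singleton, hblocks,
      flatten_map_descents_maxSplit le_rfl (hnd.sublist (take_sublist _ _)),
      ih (l := right) (by omega) (hnd.sublist (drop_sublist _ _)) hright_last
        (fun x hx => hmax x ((drop_sublist _ _).mem hx))]
    have hcut : ∀ x ∈ left.getLast?, ∀ y ∈ (m :: right).head?, y < x := by
      intro x hx y hy
      rw [head?_cons, Option.mem_some_iff] at hy
      have hx := mem_of_mem_getLast? hx
      exact hy ▸ hm_lt x (hl ▸ mem_append_left _ hx) (ne_of_mem_of_not_mem hx hm_left)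
    have hr_mem : r ∈ right := hr ▸ mem_cons_self
    have hmr : m < r := hm_lt r (hl ▸ mem_append_right _ (mem_cons_of_mem _ hr_mem))
      (ne_of_mem_of_not_mem hr_mem hm_right)
    conv_rhs => rw [← hl, descents_append hcut, hr, descents_cons_cons_of_lt rs hmr]
    rw [hr]

section PermWord

variable {n : ℕ} (σ : Equiv.Perm (Fin n))

theorem length_permWord : (permWord σ).length = n + 1 := by simp [permWord]

theorem permWord_getD_of_lt {i : ℕ} (hi : i < n) :
    (permWord σ).getD i 0 = σ ⟨i, hi⟩ + 1 := by
  rw [permWord, getD_append _ _ _ _ (by simpa), getD_eq_getElem _ _ (by simpa)]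
  simp

theorem permWord_getD_self : (permWord σ).getD n 0 = n + 1 := by
  simp [permWord]

theorem nodup_permWord : (permWord σ).Nodup := by
  refine nodup_append.2 ⟨nodup_ofFn.2 fun a b h => σ.injective (Fin.ext (by simpa using h)),
    nodup_singleton _, ?_⟩
  simp only [mem_ofFn, mem_singleton]
  rintro _ ⟨i, rfl⟩ _ rfl
  have := (σ i).isLt
  omega

theorem getLast?_permWord : (permWord σ).getLast? = some (n + 1) := getLast?_concat

theorem le_of_mem_permWord {x : ℕ} (hx : x ∈ permWord σ) : x ≤ n + 1 := by
  simp only [permWord, mem_append, mem_ofFn, mem_singleton] at hx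
  rcases hx with ⟨i, rfl⟩ | rfl
  · have := (σ i).isLt
    omega
  · rfl

theorem leafVals_permTree : (permTree σ).leafVals = descents (permWord σ) :=
  leafVals_minDecomp le_rfl (nodup_permWord σ) (getLast?_permWord σ)
    fun _ => le_of_mem_permWord σ

theorem isDescent_permWord_iff (i : Fin n) :
    (i + 1 = n + 1 ∨ (permWord σ).getD (i + 1) 0 < (permWord σ).getD i 0) ↔
      ∃ h : (i : ℕ) + 1 < n, σ ⟨(i : ℕ) + 1, h⟩ < σ i := by
  rw [permWord_getD_of_lt σ i.isLt]
  by_cases h : (i : ℕ) + 1 < n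
  · rw [permWord_getD_of_lt σ h]
    simp [h, i.isLt.ne]
  · have hi : (i : ℕ) + 1 = n := by omega
    have := (σ ⟨i, i.isLt⟩).isLt
    rw [hi, permWord_getD_self]
    constructor
    · omega
    · rintro ⟨h', -⟩
      omega

theorem length_descents_permWord : (descents (permWord σ)).length = numDescents σ + 1 := by
  rw [descents_eq_map_filter_range 0, length_map, length_permWord, range_succ, filter_append,
    length_append]
  change ((Finset.range n).filter _).card + ([n].filter _).length = _
  rw [Finset.card_filter, ← Fin.sum_univ_eq_sum_range, numDescents, Finset.card_filter]
  simp only [isDescent_permWord_iff]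
  simp

end PermWord

/-- Leaves of the minimum decomposition tree are exactly the descents (Lemma 3.8): for
`σ ∈ Sₙ` extended by appending `n+1`, the set of leaf labels of the minimum
decomposition tree equals the set of values at descent positions of the extended word
(where the final `n+1` counts as one extra descent); hence the number of leaves equals
`des(σ) + 1`. -/
theorem leaves_eq_descents {n : ℕ} (σ : Equiv.Perm (Fin n)) :
    (RTree.leafVals (permTree σ)).toFinset
        = ((Finset.range (permWord σ).length).filter fun i =>
            i + 1 = (permWord σ).length
              ∨ (permWord σ).getD (i + 1) 0 < (permWord σ).getD i 0).image
            (fun i => (permWord σ).getD i 0) ∧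
    RTree.leafCount (permTree σ) = numDescents σ + 1 := by
  rw [RTree.leafCount_eq_length_leafVals, leafVals_permTree, length_descents_permWord,
    descents_eq_map_filter_range 0]
  refine ⟨?_, rfl⟩
  ext x
  simp
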